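/- If C is a countable dense subset of a bicontinuous poset X in its interval topology, then for every x ∈ X the set ↡x ∩ C contains a directed set with supremum x, and ↟x ∩ C contains a filtered set with infimum x. -/

import Mathlib

open Set

/-- `a` is way below `x`. -/
def wayBelow {α : Type*} [Preorder α] (a x : α) : Prop :=
  ∀ S : Set α, S.Nonempty → DirectedOn (· ≤ ·) S → ∀ d, IsLUB S d → x ≤ d →
    ∃ s ∈ S, a ≤ s

/-- A poset is continuous if every element is the supremum of a directed set
of elements way below it. -/
def ContinuousPoset (α : Type*) [Preorder α] : Prop :=
  ∀ x : α, ∃ S : Set α, S ⊆ {a | wayBelow a x} ∧ S.Nonempty ∧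
    DirectedOn (· ≤ ·) S ∧ IsLUB S x

/-- A basis for a continuous poset. -/
def PosetBasis {α : Type*} [Preorder α] (B : Set α) : Prop :=
  ∀ x : α, ∃ S : Set α, S ⊆ B ∩ {a | wayBelow a x} ∧ S.Nonempty ∧
    DirectedOn (· ≤ ·) S ∧ IsLUB S x

/-- Scott open sets: upper sets inaccessible by directed suprema. -/
def ScottOpen {α : Type*} [Preorder α] (U : Set α) : Prop :=
  IsUpperSet U ∧ ∀ S : Set α, S.Nonempty → DirectedOn (· ≤ ·) S → ∀ d, IsLUB S d →
    d ∈ U → (S ∩ U).Nonempty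

/-- The Scott topology. -/
def scottTop (α : Type*) [Preorder α] : TopologicalSpace α :=
  TopologicalSpace.generateFrom {U | ScottOpen U}

/-- A bicontinuous poset. -/
def Bicontinuous (α : Type*) [Preorder α] : Prop :=
  ContinuousPoset α ∧
  (∀ x y : α, wayBelow x y ↔
    ∀ S : Set α, S.Nonempty → DirectedOn (· ≥ ·) S → ∀ i, IsGLB S i → i ≤ x →
      ∃ s ∈ S, s ≤ y) ∧
  (∀ x : α, DirectedOn (· ≥ ·) {y | wayBelow x y} ∧ IsGLB {y | wayBelow x y} x)

/-- The basic open intervals `(a,b) = {x | a ≪ x ≪ b}`. -/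
def intervalBasis (α : Type*) [Preorder α] : Set (Set α) :=
  {s | ∃ a b : α, s = {x | wayBelow a x ∧ wayBelow x b}}

/-- The interval topology, generated by the sets `(a,b)`. -/
def intervalTop (α : Type*) [Preorder α] : TopologicalSpace α :=
  TopologicalSpace.generateFrom (intervalBasis α)

/-- A globally hyperbolic poset: bicontinuous, with compact closed intervals. -/
def GloballyHyperbolic (α : Type*) [PartialOrder α] : Prop :=
  Bicontinuous α ∧ ∀ a b : α, @IsCompact α (intervalTop α) (Set.Icc a b)

/-- The poset of closed intervals `[a,b]`, `a ≤ b`, under reverse inclusion. -/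
def IX (α : Type*) [PartialOrder α] := {p : α × α // p.1 ≤ p.2}

instance IX.instPartialOrder {α : Type*} [PartialOrder α] : PartialOrder (IX α) where
  le x y := x.1.1 ≤ y.1.1 ∧ y.1.2 ≤ x.1.2
  le_refl x := ⟨le_refl _, le_refl _⟩
  le_trans x y z h1 h2 := ⟨h1.1.trans h2.1, h2.2.trans h1.2⟩
  le_antisymm x y h1 h2 :=
    Subtype.ext (Prod.ext_iff.mpr ⟨le_antisymm h1.1 h2.1, le_antisymm h2.2 h1.2⟩)

section Rel

variable {β : Type*}

/-- Directedness with respect to an arbitrary relation. -/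
def relDirectedOn (r : β → β → Prop) (S : Set β) : Prop :=
  ∀ x ∈ S, ∀ y ∈ S, ∃ z ∈ S, r x z ∧ r y z

/-- Least upper bound with respect to an arbitrary relation. -/
def relIsLUB (r : β → β → Prop) (S : Set β) (d : β) : Prop :=
  (∀ s ∈ S, r s d) ∧ ∀ u, (∀ s ∈ S, r s u) → r d u

/-- The way-below relation with respect to an arbitrary relation. -/
def relWayBelow (r : β → β → Prop) (a x : β) : Prop :=
  ∀ S : Set β, S.Nonempty → relDirectedOn r S → ∀ d, relIsLUB r S d → r x d →
    ∃ s ∈ S, r a s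

/-- An abstract basis: a transitive relation, interpolative from the `-` direction. -/
def AbstractBasis (r : β → β → Prop) : Prop :=
  Transitive r ∧ ∀ (F : Finset β) (x : β), (∀ y ∈ F, r y x) →
    ∃ z, (∀ y ∈ F, r y z) ∧ r z x

/-- Interpolation in the `+` direction. -/
def PlusInterpolative (r : β → β → Prop) : Prop :=
  ∀ (F : Finset β) (x : β), (∀ y ∈ F, r x y) → ∃ z, r x z ∧ (∀ y ∈ F, r z y)

/-- An ideal: a nonempty directed lower set. -/
def IsIdeal (r : β → β → Prop) (I : Set β) : Prop :=
  I.Nonempty ∧ (∀ x y, r x y → y ∈ I → x ∈ I) ∧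
    ∀ x ∈ I, ∀ y ∈ I, ∃ z ∈ I, r x z ∧ r y z

/-- The ideal completion: ideals ordered by inclusion. -/
def IdealCompletion (r : β → β → Prop) := {I : Set β // IsIdeal r I}

instance IdealCompletion.instPartialOrder {β : Type*} (r : β → β → Prop) :
    PartialOrder (IdealCompletion r) where
  le I J := I.1 ⊆ J.1
  le_refl I := subset_rfl
  le_trans I J K h1 h2 := Set.Subset.trans h1 h2
  le_antisymm I J h1 h2 := Subtype.ext (Set.Subset.antisymm h1 h2)

end Rel

/-- The order on maximal elements induced by interval endpoints. -/
def maxLe {α : Type*} (left right : α → α) (a b : α) : Prop :=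
  ∃ x, left x = a ∧ right x = b

/-- An interval poset. -/
structure IntervalPoset (α : Type*) [PartialOrder α] where
  left : α → α
  right : α → α
  left_max : ∀ x, IsMax (left x)
  right_max : ∀ x, IsMax (right x)
  glb : ∀ x, IsGLB {left x, right x} x
  glue : ∀ x y, right x = left y →
    ∃ z, IsGLB {x, y} z ∧ left z = left x ∧ right z = right y
  sub_left : ∀ x p, IsMax p → x ≤ p →
    ∃ z, IsGLB {left x, p} z ∧ left z = left x ∧ right z = p
  sub_right : ∀ x p, IsMax p → x ≤ p →
    ∃ z, IsGLB {p, right x} z ∧ left z = p ∧ right z = right x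

/-- An interval domain. -/
structure IntervalDomain (α : Type*) [PartialOrder α] extends IntervalPoset α where
  dcpo : ∀ S : Set α, S.Nonempty → DirectedOn (· ≤ ·) S → ∃ d, IsLUB S d
  cont : ContinuousPoset α
  ax1 : ∀ x p, IsMax p → wayBelow x p →
    (∀ z, IsGLB {left x, p} z → ∃ u, wayBelow z u) ∧
    (∀ z, IsGLB {p, right x} z → ∃ u, wayBelow z u)
  ax2b : ∀ x : α, (∃ u, wayBelow x u) ↔
    (∀ y, left y = left x → y ≤ x →
      relWayBelow (fun u v => u ≤ v ∧ right u = right y ∧ right v = right y) y (right y))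
  ax2c : ∀ x : α, (∃ u, wayBelow x u) ↔
    (∀ y, right y = right x → y ≤ x →
      relWayBelow (fun u v => u ≤ v ∧ left u = left y ∧ left v = left y) y (left y))
  ax3a : ∀ (p : α) (S : Set α), S.Nonempty → S ⊆ {z | left z = p} →
    DirectedOn (· ≤ ·) S → ∀ u, IsLUB S u →
      left u = p ∧ ∀ (q : α) (T : Set α), T.Nonempty → T ⊆ {z | left z = q} →
        DirectedOn (· ≤ ·) T → ∀ v, IsLUB T v → right '' T = right '' S →
          right u = right v
  ax3b : ∀ (q : α) (S : Set α), S.Nonempty → S ⊆ {z | right z = q} →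
    DirectedOn (· ≤ ·) S → ∀ u, IsLUB S u →
      right u = q ∧ ∀ (p : α) (T : Set α), T.Nonempty → T ⊆ {z | right z = p} →
        DirectedOn (· ≤ ·) T → ∀ v, IsLUB T v → left '' T = left '' S →
          left u = left v
  ax4 : ∀ x : α, @IsCompact α (scottTop α) ({y | x ≤ y} ∩ {y | IsMax y})

/-!
Interpolation holds for `≪` in every continuous poset. Given `a ≪ b`, interpolate `a ≪ m ≪ q ≪ b`:
the basic open interval `(a, q)` contains `m`, so a dense `C` meets it, which puts an element of `C`
strictly between `a` and `b` in the sense of `≪`. Hence `↡x ∩ C` is cofinal in `↡x` and `↟x ∩ C` is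
coinitial in `↟x`, and a cofinal (coinitial) part of a directed (filtered) set inherits directedness
and the supremum (infimum).
-/

section WayBelow

variable {α : Type*} [Preorder α] {a b c x : α}

theorem wayBelow.le (h : wayBelow a x) : a ≤ x := by
  obtain ⟨s, rfl, hs⟩ :=
    h {x} (singleton_nonempty x) (directedOn_singleton x) x isLUB_singleton le_rfl
  exact hs

theorem wayBelow_of_le_of_wayBelow (hab : a ≤ b) (h : wayBelow b c) : wayBelow a c :=
  fun S hne hdir d hlub hcd =>
    let ⟨s, hs, hbs⟩ := h S hne hdir d hlub hcd
    ⟨s, hs, hab.trans hbs⟩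

theorem wayBelow.trans_le (h : wayBelow a b) (hbc : b ≤ c) : wayBelow a c :=
  fun S hne hdir d hlub hcd => h S hne hdir d hlub (hbc.trans hcd)

theorem ContinuousPoset.nonempty_wayBelow (hc : ContinuousPoset α) (x : α) :
    {a | wayBelow a x}.Nonempty :=
  let ⟨_, hS, hne, _⟩ := hc x
  hne.mono hS

theorem ContinuousPoset.directedOn_wayBelow (hc : ContinuousPoset α) (x : α) :
    DirectedOn (· ≤ ·) {a | wayBelow a x} := by
  obtain ⟨S, hS, hne, hdir, hlub⟩ := hc x
  intro a ha b hb
  obtain ⟨s, hs, has⟩ := ha S hne hdir x hlub le_rfl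
  obtain ⟨t, ht, hbt⟩ := hb S hne hdir x hlub le_rfl
  obtain ⟨u, hu, hsu, htu⟩ := hdir s hs t ht
  exact ⟨u, hS hu, has.trans hsu, hbt.trans htu⟩

theorem ContinuousPoset.isLUB_wayBelow (hc : ContinuousPoset α) (x : α) :
    IsLUB {a | wayBelow a x} x := by
  obtain ⟨S, hS, -, -, hlub⟩ := hc x
  exact ⟨fun _ ha => wayBelow.le ha, fun _ hu => hlub.2 (upperBounds_mono_set hS hu)⟩

theorem ContinuousPoset.exists_wayBelow_wayBelow (hc : ContinuousPoset α) (h : wayBelow a x) :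
    ∃ b, wayBelow a b ∧ wayBelow b x := by
  set S := {a | ∃ b, wayBelow a b ∧ wayBelow b x}
  have hne : S.Nonempty := by
    obtain ⟨b, hb⟩ := hc.nonempty_wayBelow x
    obtain ⟨a, ha⟩ := hc.nonempty_wayBelow b
    exact ⟨a, b, ha, hb⟩
  have hdir : DirectedOn (· ≤ ·) S := by
    rintro a₁ ⟨b₁, hab₁, hb₁⟩ a₂ ⟨b₂, hab₂, hb₂⟩
    obtain ⟨b, hb, hb₁b, hb₂b⟩ := hc.directedOn_wayBelow x b₁ hb₁ b₂ hb₂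
    obtain ⟨c, hcb, ha₁c, ha₂c⟩ :=
      hc.directedOn_wayBelow b a₁ (hab₁.trans_le hb₁b) a₂ (hab₂.trans_le hb₂b)
    exact ⟨c, ⟨b, hcb, hb⟩, ha₁c, ha₂c⟩
  have hlub : IsLUB S x :=
    ⟨fun _ ⟨_, hab, hbx⟩ => hab.le.trans hbx.le,
      fun _ hu => (hc.isLUB_wayBelow x).2 fun b hb =>
        (hc.isLUB_wayBelow b).2 fun _ ha => hu ⟨b, ha, hb⟩⟩
  obtain ⟨s, ⟨b, hsb, hbx⟩, has⟩ := h S hne hdir x hlub le_rfl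
  exact ⟨b, wayBelow_of_le_of_wayBelow has hsb, hbx⟩

-- Otherwise `x`, the infimum of the empty set `↟x`, is the top element, and then `x ≪ x`.
theorem Bicontinuous.nonempty_wayAbove (h : Bicontinuous α) (x : α) :
    {y | wayBelow x y}.Nonempty := by
  by_contra hempty
  have htop : IsTop x := isGLB_empty_iff.1 (not_nonempty_iff_eq_empty.1 hempty ▸ (h.2.2 x).2)
  exact hempty ⟨x, (h.2.1 x x).2 fun _ ⟨s, hs⟩ _ _ _ _ => ⟨s, hs, htop s⟩⟩

theorem Dense.exists_mem_wayBelow_wayBelow {C : Set α} (hC : @Dense α (intervalTop α) C)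
    (hc : ContinuousPoset α) (hab : wayBelow a b) : ∃ c ∈ C, wayBelow a c ∧ wayBelow c b := by
  let := intervalTop α
  obtain ⟨m, ham, hmb⟩ := hc.exists_wayBelow_wayBelow hab
  obtain ⟨q, hmq, hqb⟩ := hc.exists_wayBelow_wayBelow hmb
  have hopen : IsOpen {y | wayBelow a y ∧ wayBelow y q} :=
    TopologicalSpace.isOpen_generateFrom_of_mem ⟨a, q, rfl⟩
  obtain ⟨c, ⟨hac, hcq⟩, hcC⟩ := hC.inter_open_nonempty _ hopen ⟨m, ham, hmq⟩
  exact ⟨c, hcC, hac, hcq.trans_le hqb.le⟩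

end WayBelow

theorem dense_approximates_general {α : Type*} [PartialOrder α]
    (h : Bicontinuous α) (C : Set α)
    (hdense : @Dense α (intervalTop α) C) (x : α) :
    (∃ S : Set α, S ⊆ {a | wayBelow a x} ∩ C ∧ S.Nonempty ∧
      DirectedOn (· ≤ ·) S ∧ IsLUB S x) ∧
    (∃ S : Set α, S ⊆ {a | wayBelow x a} ∩ C ∧ S.Nonempty ∧
      DirectedOn (· ≥ ·) S ∧ IsGLB S x) := by
  have hcofinal : IsCofinalFor {a | wayBelow a x} ({a | wayBelow a x} ∩ C) := fun _ ha =>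
    let ⟨c, hcC, hac, hcx⟩ := hdense.exists_mem_wayBelow_wayBelow h.1 ha
    ⟨c, ⟨hcx, hcC⟩, hac.le⟩
  have hcoinitial : IsCoinitialFor {y | wayBelow x y} ({y | wayBelow x y} ∩ C) := fun _ hy =>
    let ⟨c, hcC, hxc, hcy⟩ := hdense.exists_mem_wayBelow_wayBelow h.1 hy
    ⟨c, ⟨hxc, hcC⟩, hcy.le⟩
  obtain ⟨hfiltered, hglb⟩ := h.2.2 x
  exact ⟨⟨_, subset_rfl, hcofinal.nonempty (h.1.nonempty_wayBelow x),
      (h.1.directedOn_wayBelow x).of_isCofinalFor inter_subset_left hcofinal,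
      (h.1.isLUB_wayBelow x).of_isCofinalFor inter_subset_left hcofinal⟩,
    ⟨_, subset_rfl, hcoinitial.nonempty (h.nonempty_wayAbove x),
      DirectedOn.of_isCofinalFor (α := αᵒᵈ) hfiltered inter_subset_left hcoinitial,
      hglb.of_isCoinitialFor inter_subset_left hcoinitial⟩⟩

/-- for a countable dense subset `C` of a bicontinuous poset and any
`x`, `↡x ∩ C` contains a directed set with supremum `x` and `↟x ∩ C` contains a
filtered set with infimum `x`. -/
theorem dense_approximates {α : Type*} [PartialOrder α]
    (h : Bicontinuous α) (C : Set α) (hC : C.Countable)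
    (hdense : @Dense α (intervalTop α) C) (x : α) :
    (∃ S : Set α, S ⊆ {a | wayBelow a x} ∩ C ∧ S.Nonempty ∧
      DirectedOn (· ≤ ·) S ∧ IsLUB S x) ∧
    (∃ S : Set α, S ⊆ {a | wayBelow x a} ∩ C ∧ S.Nonempty ∧
      DirectedOn (· ≥ ·) S ∧ IsGLB S x) :=
  dense_approximates_general h C hdense x
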